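/- arXiv:1707.09171 — 2 statements merged into one kernel-verified Lean document; each statement's English description precedes it below -/
import Mathlib

section
/- Let X be a two-dimensional real normed space with unit sphere S and 0 < ρ < 1, satisfying property (P-ρS). For every u ∈ S, with u⊥ ∈ S the (unique) unit vector Birkhoff-orthogonal to u with u ≺ u⊥, there exists a unique μ > 0 such that both ρ(u − μ u⊥) and ρ(u + μ u⊥) belong to S. -/
open Real Set

/-- `N` is a norm on the two-dimensional real vector space `ℝ × ℝ`. -/
def IsNorm (N : ℝ × ℝ → ℝ) : Prop :=
  (∀ x, N x = 0 ↔ x = 0) ∧ (∀ (a : ℝ) (x : ℝ × ℝ), N (a • x) = |a| * N x) ∧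
    ∀ x y, N (x + y) ≤ N x + N y

/-- The 2D cross product `u ∧ v`; `u ≺ v` means `0 < wedge u v`. -/
def wedge (u v : ℝ × ℝ) : ℝ := u.1 * v.2 - u.2 * v.1

/-- `inf_{t ∈ [0,1]} N ((1−t)u + tv)`, the minimal `N`-norm on the segment `[u,v]`. -/
noncomputable def segInf (N : ℝ × ℝ → ℝ) (u v : ℝ × ℝ) : ℝ :=
  sInf ((fun t : ℝ => N ((1 - t) • u + t • v)) '' Icc (0:ℝ) 1)

/-- Property (P-ρS): every chord of the unit sphere of `N` that supports `ρS`
touches `ρS` at its midpoint. -/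
def PropP (N : ℝ × ℝ → ℝ) (ρ : ℝ) : Prop :=
  ∀ u v : ℝ × ℝ, N u = 1 → N v = 1 → segInf N u v = ρ →
    N ((1/2 : ℝ) • u + (1/2 : ℝ) • v) = ρ

/-!
Let `r < 0 < s` be the parameters at which the line `u + t w` has norm `ρ⁻¹` (each unique by
convexity); it suffices to show `s + r ≤ 0`, the reverse inequality following on replacing `w`
by `-w`. The chord of `S` on the line `ρu + tw`, which supports `ρS` at `ρu`, has midpoint
`ρ(s + r)/2`, but (P-ρS) only places it in the segment where that line touches `ρS`. So tilt the
direction to `w + εu` and translate the line until it supports `ρS` again: by Birkhoff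
orthogonality, every point where the new line touches `ρS` has parameter `t ≤ 0`, hence so does
the midpoint of its chord by (P-ρS). As `ε → 0` the new chord's endpoints approach `ρs` and `ρr`
(convexity of the norm along lines gives quantitative margins), whence `s + r ≤ 0`.
-/

open Filter

section

variable {N : ℝ × ℝ → ℝ} {c d x : ℝ × ℝ} {a v τ : ℝ}

namespace IsNorm

theorem map_smul (hN : IsNorm N) (a : ℝ) (x : ℝ × ℝ) : N (a • x) = |a| * N x :=
  hN.2.1 a x

theorem map_smul_of_nonneg (hN : IsNorm N) (ha : 0 ≤ a) (x : ℝ × ℝ) : N (a • x) = a * N x := by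
  rw [hN.map_smul, abs_of_nonneg ha]

theorem map_neg (hN : IsNorm N) (x : ℝ × ℝ) : N (-x) = N x := by
  simpa using hN.map_smul (-1) x

theorem pos (hN : IsNorm N) (hx : x ≠ 0) : 0 < N x := by
  have h := hN.2.2 x (-x)
  have h0 : N 0 = 0 := (hN.1 0).mpr rfl
  rw [add_neg_cancel, h0, hN.map_neg] at h
  exact lt_of_le_of_ne (by linarith) (Ne.symm (mt (hN.1 x).mp hx))

theorem nonneg (hN : IsNorm N) (x : ℝ × ℝ) : 0 ≤ N x := by
  rcases eq_or_ne x 0 with rfl | hx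
  · exact ((hN.1 0).mpr rfl).ge
  · exact (hN.pos hx).le

theorem sub_le_map_add (hN : IsNorm N) (x y : ℝ × ℝ) : N x - N y ≤ N (x + y) := by
  have h := hN.2.2 (x + y) (-y)
  rw [add_neg_cancel_right, hN.map_neg] at h
  linarith

theorem abs_map_add_sub_le (hN : IsNorm N) (x y : ℝ × ℝ) : |N (x + y) - N x| ≤ N y := by
  have h₁ := hN.2.2 x y
  have h₂ := hN.2.2 (x + y) (-y)
  rw [add_neg_cancel_right, hN.map_neg] at h₂
  exact abs_sub_le_iff.mpr ⟨by linarith, by linarith⟩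

theorem convexOn_line (hN : IsNorm N) (c d : ℝ × ℝ) :
    ConvexOn ℝ univ fun t : ℝ => N (c + t • d) := by
  refine ⟨convex_univ, fun s _ t _ a b ha hb hab => ?_⟩
  have hcomb : a • (c + s • d) + b • (c + t • d) = (a + b) • c + (a • s + b • t) • d := by module
  rw [hab, one_smul] at hcomb
  calc N (c + (a • s + b • t) • d) ≤ N (a • (c + s • d)) + N (b • (c + t • d)) :=
        hcomb ▸ hN.2.2 _ _
    _ = a • N (c + s • d) + b • N (c + t • d) := by
        rw [hN.map_smul_of_nonneg ha, hN.map_smul_of_nonneg hb, smul_eq_mul, smul_eq_mul]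

theorem continuous_line (hN : IsNorm N) (c d : ℝ × ℝ) : Continuous fun t : ℝ => N (c + t • d) :=
  continuousOn_univ.mp ((hN.convexOn_line c d).continuousOn isOpen_univ)

theorem tendsto_line_cocompact (hN : IsNorm N) (c : ℝ × ℝ) (hd : d ≠ 0) :
    Tendsto (fun t : ℝ => N (c + t • d)) (cocompact ℝ) atTop := by
  have hlin : Tendsto (fun t : ℝ => |t| * N d - N c) (cocompact ℝ) atTop :=
    tendsto_atTop_add_const_right _ _ (tendsto_norm_cocompact_atTop.atTop_mul_const (hN.pos hd))
  refine tendsto_atTop_mono (fun t => ?_) hlin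
  have h := hN.sub_le_map_add (t • d) c
  rwa [hN.map_smul, add_comm] at h

theorem exists_forall_line_le (hN : IsNorm N) (c : ℝ × ℝ) (hd : d ≠ 0) :
    ∃ τ : ℝ, ∀ t : ℝ, N (c + τ • d) ≤ N (c + t • d) :=
  (hN.continuous_line c d).exists_forall_le (hN.tendsto_line_cocompact c hd)

theorem exists_gt_line_eq (hN : IsNorm N) (hd : d ≠ 0) (h : N (c + τ • d) < v) :
    ∃ r, τ < r ∧ N (c + r • d) = v := by
  have hlarge := (hN.tendsto_line_cocompact c hd).eventually_ge_atTop v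
  obtain ⟨T, hτT, hT⟩ :=
    ((eventually_ge_atTop τ).and (hlarge.filter_mono atTop_le_cocompact)).exists
  obtain ⟨r, hr, hrv⟩ := intermediate_value_Icc hτT (hN.continuous_line c d).continuousOn ⟨h.le, hT⟩
  exact ⟨r, lt_of_le_of_ne hr.1 (by rintro rfl; exact h.ne hrv), hrv⟩

theorem exists_lt_line_eq (hN : IsNorm N) (hd : d ≠ 0) (h : N (c + τ • d) < v) :
    ∃ r, r < τ ∧ N (c + r • d) = v := by
  have h' : N (c + (-τ) • -d) < v := by rwa [neg_smul_neg]
  obtain ⟨r, hr, hrv⟩ := hN.exists_gt_line_eq (neg_ne_zero.mpr hd) h'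
  exact ⟨-r, by linarith, by rwa [neg_smul, ← smul_neg]⟩

theorem eq_of_line_eq (hN : IsNorm N) (h₀ : N c < v) {s t : ℝ} (hs : 0 < s) (ht : 0 < t)
    (h₁ : N (c + s • d) = v) (h₂ : N (c + t • d) = v) : s = t := by
  have hmin : N (c + min s t • d) = v := by rcases min_choice s t with h | h <;> rwa [h]
  have hmono := (hN.convexOn_line c d).strictMonoOn (mem_univ 0) (lt_min hs ht)
    (by rwa [zero_smul, add_zero, hmin])
  exact hmono.injOn ⟨mem_univ s, min_le_left s t⟩ ⟨mem_univ t, min_le_right s t⟩ (h₁.trans h₂.symm)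

end IsNorm

end

theorem ConvexOn.mem_Ioo_of_apply_lt {f : ℝ → ℝ} (hf : ConvexOn ℝ univ f) {r₁ r₂ a L : ℝ}
    (h : r₁ < r₂) (h₁ : f r₁ = L) (h₂ : f r₂ = L) (ha : f a < L) : a ∈ Ioo r₁ r₂ := by
  constructor
  · by_contra! har
    rcases har.eq_or_lt with rfl | har
    · exact ha.ne h₁
    · have := hf.lt_right_of_left_lt (mem_univ a) (mem_univ r₂)
        (by rw [openSegment_eq_Ioo (har.trans h)]; exact ⟨har, h⟩) (by rwa [h₁])
      linarith
  · by_contra! har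
    rcases har.eq_or_lt with rfl | har
    · exact ha.ne h₂
    · have := hf.lt_left_of_right_lt (mem_univ r₁) (mem_univ a)
        (by rw [openSegment_eq_Ioo (h.trans har)]; exact ⟨h, har⟩) (by rwa [h₂])
      linarith

theorem ConvexOn.lt_of_lt_apply {f : ℝ → ℝ} (hf : ConvexOn ℝ univ f) {r₁ r₂ a L : ℝ}
    (h₁ : f r₁ = L) (h₂ : f r₂ = L) (ha : L < f a) (har : a ≤ r₂) : a < r₁ := by
  by_contra! hra
  have := hf.le_on_segment (mem_univ r₁) (mem_univ r₂)
    (by rw [segment_eq_Icc (hra.trans har)]; exact ⟨hra, har⟩)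
  rw [h₁, h₂, max_self] at this
  linarith

section

variable {N : ℝ × ℝ → ℝ} {u w : ℝ × ℝ} {ε : ℝ}

def BirkhoffOrth (N : ℝ × ℝ → ℝ) (u w : ℝ × ℝ) : Prop :=
  ∀ l : ℝ, N u ≤ N (u + l • w)

theorem BirkhoffOrth.neg (h : BirkhoffOrth N u w) : BirkhoffOrth N u (-w) := fun l => by
  simpa only [smul_neg, ← neg_smul] using h (-l)

theorem BirkhoffOrth.mul_le (hN : IsNorm N) (h : BirkhoffOrth N u w) (a b : ℝ) :
    a * N u ≤ N (a • u + b • w) := by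
  rcases le_or_gt a 0 with ha | ha
  · exact (mul_nonpos_of_nonpos_of_nonneg ha (hN.nonneg u)).trans (hN.nonneg _)
  · have hab : a • u + b • w = a • (u + (b / a) • w) := by
      rw [smul_add, smul_smul, mul_div_cancel₀ b ha.ne']
    rw [hab, hN.map_smul_of_nonneg ha.le]
    exact mul_le_mul_of_nonneg_left (h _) ha.le

theorem BirkhoffOrth.one_sub_two_mul_le (hN : IsNorm N) (h : BirkhoffOrth N u w) (hu : N u = 1)
    (hw : N w = 1) (hε₀ : 0 ≤ ε) (hε₁ : ε ≤ 1) (t : ℝ) :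
    1 - 2 * ε ≤ N (u + t • (w + ε • u)) := by
  have htilt := hN.sub_le_map_add (u + t • w) ((t * ε) • u)
  have hdir := hN.sub_le_map_add (t • (w + ε • u)) u
  have hw' := hN.sub_le_map_add w (ε • u)
  rw [show u + t • w + (t * ε) • u = u + t • (w + ε • u) by module, hN.map_smul, abs_mul,
    abs_of_nonneg hε₀, hu, mul_one] at htilt
  rw [add_comm _ u, hN.map_smul, hu] at hdir
  rw [hN.map_smul_of_nonneg hε₀, hu, hw, mul_one] at hw'
  have hu1 : 1 ≤ N (u + t • w) := hu ▸ h t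
  -- the bound `1 - |t| ε` (from `htilt`) serves for `|t| ≤ 2`, the bound `|t| (1 - ε) - 1` beyond
  rcases le_or_gt |t| 2 with ht | ht
  · nlinarith
  · nlinarith

end

section

variable {N : ℝ × ℝ → ℝ} {c d u w : ℝ × ℝ} {ρ ε τ : ℝ}

theorem PropP.norm_midpoint_eq (hP : PropP N ρ) {r₁ r₂ : ℝ}
    (hmin : ∀ t : ℝ, ρ ≤ N (c + t • d)) (hτ : N (c + τ • d) = ρ) (h₁ : r₁ < τ) (h₂ : τ < r₂)
    (hr₁ : N (c + r₁ • d) = 1) (hr₂ : N (c + r₂ • d) = 1) :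
    N (c + ((r₁ + r₂) / 2) • d) = ρ := by
  have hseg : ∀ s : ℝ,
      (1 - s) • (c + r₁ • d) + s • (c + r₂ • d) = c + ((1 - s) * r₁ + s * r₂) • d :=
    fun s => by module
  have hτseg : (1 - (τ - r₁) / (r₂ - r₁)) * r₁ + (τ - r₁) / (r₂ - r₁) * r₂ = τ := by
    field_simp [(sub_pos.mpr (h₁.trans h₂)).ne']
    ring
  have hinf : segInf N (c + r₁ • d) (c + r₂ • d) = ρ := by
    refine IsLeast.csInf_eq ⟨⟨(τ - r₁) / (r₂ - r₁), ⟨?_, ?_⟩, ?_⟩, ?_⟩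
    · exact div_nonneg (by linarith) (by linarith)
    · exact div_le_one_of_le₀ (by linarith) (by linarith)
    · simp only [hseg, hτseg, hτ]
    · rintro _ ⟨s, -, rfl⟩
      simp only [hseg]
      exact hmin _
  have hmid :
      (1 / 2 : ℝ) • (c + r₁ • d) + (1 / 2 : ℝ) • (c + r₂ • d) = c + ((r₁ + r₂) / 2) • d := by
    module
  rw [← hmid]
  exact hP _ _ hr₁ hr₂ hinf

theorem PropP.exists_chord (hN : IsNorm N) (hP : PropP N ρ) (hρ₀ : 0 < ρ) (hρ₁ : ρ < 1)
    (hd : d ≠ 0) (hmin : ∀ t : ℝ, N (c + τ • d) ≤ N (c + t • d)) (hpos : 0 < N (c + τ • d)) :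
    ∃ r₁ r₂ : ℝ, r₁ < r₂ ∧ N (c + r₁ • d) = N (c + τ • d) / ρ ∧
      N (c + r₂ • d) = N (c + τ • d) / ρ ∧ N (c + ((r₁ + r₂) / 2) • d) = N (c + τ • d) := by
  set m := N (c + τ • d)
  have hlt : m < m / ρ := (lt_div_iff₀ hρ₀).mpr (mul_lt_of_lt_one_right hpos hρ₁)
  obtain ⟨r₁, h₁, hr₁⟩ := hN.exists_lt_line_eq hd hlt
  obtain ⟨r₂, h₂, hr₂⟩ := hN.exists_gt_line_eq hd hlt
  have hk : 0 < ρ / m := div_pos hρ₀ hpos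
  have hscale : ∀ t : ℝ, N ((ρ / m) • c + t • ((ρ / m) • d)) = ρ / m * N (c + t • d) := by
    intro t
    rw [← hN.map_smul_of_nonneg hk.le]
    congr 1
    module
  have hmid := hP.norm_midpoint_eq (c := (ρ / m) • c) (d := (ρ / m) • d) (τ := τ)
    (fun t => by
      rw [hscale, div_mul_eq_mul_div, le_div_iff₀ hpos]
      exact mul_le_mul_of_nonneg_left (hmin t) hρ₀.le)
    (by rw [hscale]; exact div_mul_cancel₀ ρ hpos.ne') h₁ h₂
    (by rw [hscale, hr₁]; field_simp) (by rw [hscale, hr₂]; field_simp)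
  rw [hscale] at hmid
  refine ⟨r₁, r₂, h₁.trans h₂, hr₁, hr₂, ?_⟩
  field_simp at hmid
  linarith

theorem PropP.exists_tilted_chord (hN : IsNorm N) (hP : PropP N ρ) (hρ₀ : 0 < ρ) (hρ₁ : ρ < 1)
    (hu : N u = 1) (hw : N w = 1) (hbo : BirkhoffOrth N u w) (hε₀ : 0 < ε) (hε₁ : ε < 1 / 2) :
    ∃ ψ r₁ r₂ : ℝ, 1 - 2 * ε ≤ ψ ∧ ψ ≤ 1 ∧ r₁ < r₂ ∧ r₁ + r₂ ≤ 0 ∧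
      N (u + r₁ • (w + ε • u)) = ψ / ρ ∧ N (u + r₂ • (w + ε • u)) = ψ / ρ := by
  have hd : w + ε • u ≠ 0 := by
    intro h
    rw [eq_neg_of_add_eq_zero_left h, hN.map_neg, hN.map_smul_of_nonneg hε₀.le, hu] at hw
    linarith
  obtain ⟨τ, hτ⟩ := hN.exists_forall_line_le u hd
  have hψ₁ : N (u + τ • (w + ε • u)) ≤ 1 := by simpa [hu] using hτ 0
  have hψ₀ := hbo.one_sub_two_mul_le hN hu hw hε₀.le (by linarith) τ
  obtain ⟨r₁, r₂, h₁₂, hr₁, hr₂, hmid⟩ := hP.exists_chord hN hρ₀ hρ₁ hd hτ (by linarith)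
  refine ⟨_, r₁, r₂, hψ₀, hψ₁, h₁₂, ?_, hr₁, hr₂⟩
  -- the midpoint `(1 + m ε) • u + m • w` has norm `ψ ≤ 1`, so orthogonality forces `m ε ≤ 0`
  have hsupp := hbo.mul_le hN (1 + (r₁ + r₂) / 2 * ε) ((r₁ + r₂) / 2)
  rw [hu, mul_one, show (1 + (r₁ + r₂) / 2 * ε) • u + ((r₁ + r₂) / 2) • w
    = u + ((r₁ + r₂) / 2) • (w + ε • u) by module, hmid] at hsupp
  nlinarith

end

section

variable {N : ℝ × ℝ → ℝ} {u w : ℝ × ℝ} {ρ : ℝ}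

theorem PropP.add_nonpos_of_birkhoffOrth (hN : IsNorm N) (hP : PropP N ρ) (hρ₀ : 0 < ρ)
    (hρ₁ : ρ < 1) (hu : N u = 1) (hw : N w = 1) (hbo : BirkhoffOrth N u w) {r s : ℝ} (hr : r < 0)
    (hs : 0 < s) (hNr : N (u + r • w) = ρ⁻¹) (hNs : N (u + s • w) = ρ⁻¹) : s + r ≤ 0 := by
  by_contra! hsr
  have hR : 1 < ρ⁻¹ := one_lt_inv_iff₀.mpr ⟨hρ₀, hρ₁⟩
  obtain ⟨η, hη⟩ : ∃ η : ℝ, 4 * η = s + r := ⟨(s + r) / 4, by ring⟩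
  have hη₀ : 0 < η := by linarith
  -- small enough that the tilt error `|t| ε` stays below the convexity margins at `s - η`, `r - η`
  set ε := η * (ρ⁻¹ - 1) / (2 * (s * (s + 2 * ρ⁻¹)))
  have hK : 2 * (s * (s + 2 * ρ⁻¹) * ε) = η * (ρ⁻¹ - 1) := by
    simp only [ε]; field_simp
  have hA : 0 < s * (s + 2 * ρ⁻¹) := mul_pos hs (by linarith)
  have hε₀ : 0 < ε := div_pos (mul_pos hη₀ (by linarith)) (by linarith)
  have hε₁ : ε < 1 / 2 := by
    have : η * (ρ⁻¹ - 1) < s * (s + 2 * ρ⁻¹) :=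
      mul_lt_mul'' (by linarith) (by linarith) (by linarith) (by linarith)
    nlinarith
  obtain ⟨ψ, r₁, r₂, hψ₀, hψ₁, h₁₂, hmid, hr₁, hr₂⟩ :=
    hP.exists_tilted_chord hN hρ₀ hρ₁ hu hw hbo hε₀ hε₁
  rw [div_eq_mul_inv] at hr₁ hr₂
  have hφ := hN.convexOn_line u w
  have htilt : ∀ t : ℝ, |N (u + t • (w + ε • u)) - N (u + t • w)| ≤ |t| * ε := by
    intro t
    have h := hN.abs_map_add_sub_le (u + t • w) ((t * ε) • u)
    rwa [show u + t • w + (t * ε) • u = u + t • (w + ε • u) by module, hN.map_smul, abs_mul,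
      abs_of_pos hε₀, hu, mul_one] at h
  have hφ₀ : N (u + (0 : ℝ) • w) = 1 := by rw [zero_smul, add_zero, hu]
  have hin : N (u + (s - η) • (w + ε • u)) < ψ * ρ⁻¹ := by
    have hsec := hφ.secant_mono_aux1 (mem_univ 0) (mem_univ s) (show 0 < s - η by linarith)
      (show s - η < s by linarith)
    simp only [hφ₀, hNs, sub_zero] at hsec
    have ht := (abs_le.mp (htilt (s - η))).2
    rw [abs_of_pos (show 0 < s - η by linarith)] at ht
    have p₁ := mul_le_mul_of_nonneg_left ht hs.le
    have p₂ := mul_le_mul_of_nonneg_left hψ₀ (mul_pos hs (by linarith) : 0 < s * ρ⁻¹).le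
    have p₃ : 0 < s * ε * (s + η + 2 * ρ⁻¹) := mul_pos (mul_pos hs hε₀) (by linarith)
    refine lt_of_mul_lt_mul_left ?_ hs.le
    linarith
  have hout : ψ * ρ⁻¹ < N (u + (r - η) • (w + ε • u)) := by
    have hsec :=
      hφ.secant_mono_aux1 (mem_univ (r - η)) (mem_univ 0) (show r - η < r by linarith) hr
    simp only [hφ₀, hNr, zero_sub] at hsec
    have ht := (abs_le.mp (htilt (r - η))).1
    rw [abs_of_neg (show r - η < 0 by linarith)] at ht
    have p₁ := mul_le_mul_of_nonneg_left ht (by linarith : 0 ≤ -r)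
    have hrR : 0 < -r * ρ⁻¹ := mul_pos (neg_pos.mpr hr) (by linarith)
    have p₂ := mul_le_mul_of_nonneg_left hψ₁ hrR.le
    have p₃ : -r * (-r + η) * ε < s * s * ε :=
      mul_lt_mul_of_pos_right (mul_lt_mul'' (by linarith) (by linarith) (by linarith)
        (by linarith)) hε₀
    have p₄ : 0 < s * ε * (s + 4 * ρ⁻¹) := mul_pos (mul_pos hs hε₀) (by linarith)
    refine lt_of_mul_lt_mul_left ?_ (by linarith : 0 ≤ -r)
    linarith
  have hψ := hN.convexOn_line u (w + ε • u)
  have h₁ := (hψ.mem_Ioo_of_apply_lt h₁₂ hr₁ hr₂ hin).2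
  have h₂ := hψ.lt_of_lt_apply hr₁ hr₂ hout (by linarith)
  linarith

end

theorem stmt_6_general (N : ℝ × ℝ → ℝ) (hN : IsNorm N) (ρ : ℝ) (hρ0 : 0 < ρ) (hρ1 : ρ < 1)
    (hP : PropP N ρ) (u w : ℝ × ℝ) (hu : N u = 1) (hw : N w = 1)
    (hbo : ∀ l : ℝ, N u ≤ N (u + l • w)) :
    ∃! μ : ℝ, 0 < μ ∧ N (ρ • (u - μ • w)) = 1 ∧ N (ρ • (u + μ • w)) = 1 := by
  have hscale : ∀ x, N (ρ • x) = 1 ↔ N x = ρ⁻¹ := fun x => by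
    rw [hN.map_smul_of_nonneg hρ0.le, mul_comm, mul_eq_one_iff_eq_inv₀ hρ0.ne']
  have hw₀ : w ≠ 0 := by rintro rfl; exact one_ne_zero (hw.symm.trans ((hN.1 0).mpr rfl))
  have h₀ : N (u + (0 : ℝ) • w) < ρ⁻¹ := by
    rw [zero_smul, add_zero, hu]; exact one_lt_inv_iff₀.mpr ⟨hρ0, hρ1⟩
  obtain ⟨s, hs, hNs⟩ := hN.exists_gt_line_eq hw₀ h₀
  obtain ⟨r, hr, hNr⟩ := hN.exists_lt_line_eq hw₀ h₀
  have hsr := hP.add_nonpos_of_birkhoffOrth hN hρ0 hρ1 hu hw hbo hr hs hNr hNs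
  have hrs := hP.add_nonpos_of_birkhoffOrth hN hρ0 hρ1 hu (by rwa [hN.map_neg])
    (BirkhoffOrth.neg hbo) (neg_lt_zero.mpr hs) (neg_pos.mpr hr) (by rwa [neg_smul_neg])
    (by rwa [smul_neg, ← neg_smul, neg_neg])
  refine ⟨s, ⟨hs, ?_, (hscale _).mpr hNs⟩, fun μ ⟨hμ, _, hNμ⟩ => ?_⟩
  · rw [hscale, sub_eq_add_neg, ← neg_smul, show -s = r by linarith, hNr]
  · exact hN.eq_of_line_eq (by rwa [zero_smul, add_zero] at h₀) hμ hs ((hscale _).mp hNμ) hNs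

/-- Under (P-ρS), for `u ∈ S` with Birkhoff-orthogonal successor
`w = u⊥ ∈ S` (`u ≺ w`, `u ⊥ w`), there is a unique `μ > 0` such that both
`ρ(u − μw)` and `ρ(u + μw)` lie on `S`. -/
theorem stmt_6 (N : ℝ × ℝ → ℝ) (hN : IsNorm N) (ρ : ℝ) (hρ0 : 0 < ρ) (hρ1 : ρ < 1)
    (hP : PropP N ρ) (u w : ℝ × ℝ) (hu : N u = 1) (hw : N w = 1)
    (hord : 0 < wedge u w) (hbo : ∀ l : ℝ, N u ≤ N (u + l • w)) :
    ∃! μ : ℝ, 0 < μ ∧ N (ρ • (u - μ • w)) = 1 ∧ N (ρ • (u + μ • w)) = 1 :=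
  stmt_6_general N hN ρ hρ0 hρ1 hP u w hu hw hbo
end

section
/- Let X be a two-dimensional real normed space with unit sphere S and 0 < ρ < 1. Suppose u, v ∈ S generate finite ρ-polygons P_u and P_v. Then P_u and P_v have the same number of vertices. -/
open Real Set

/-!
The successor map `x ↦ x⋆` preserves the counterclockwise order of the unit sphere locally: if
`y` lies strictly between `x` and `x⋆`, then `y⋆` is `x⋆` or comes after it. Indeed, the linear
functional equal to `1` on the chord `[x, x⋆]` is `> 1` at points of the sphere strictly inside
the arc from `x` to `x⋆` but `≤ 1` on `ρS`, so the chord `[y, y⋆]`, which touches `ρS`, cannot have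
both ends inside that arc.

On the finite set `W` of vertices of both polygons, counting upgrades this to: `⋆` maps the points
of `W` strictly between `x` and `x⋆` onto those strictly between `x⋆` and `x⋆⋆`. Hence `⋆` commutes
with the map sending each point of `W` to the next point of `W` counterclockwise, whose iterates
reach all of `W`. So once `⋆ⁿ` fixes `u` it fixes all of `W`, in particular `v`, and vice versa.
-/

lemma wedge_pluecker (a b c d : ℝ × ℝ) :
    wedge a b * wedge c d - wedge a c * wedge b d + wedge a d * wedge b c = 0 := by
  simp only [wedge]; ring

lemma eq_smul_add_smul_of_wedge_ne_zero {x y : ℝ × ℝ} (h : wedge x y ≠ 0) (p : ℝ × ℝ) :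
    p = (wedge p y / wedge x y) • x + (wedge x p / wedge x y) • y := by
  simp only [wedge] at *
  ext <;> simp only [Prod.fst_add, Prod.snd_add, Prod.smul_fst, Prod.smul_snd, smul_eq_mul] <;>
    rw [div_mul_eq_mul_div, div_mul_eq_mul_div, ← add_div, eq_div_iff h] <;> ring

lemma exists_eq_smul_of_wedge_eq_zero {x y : ℝ × ℝ} (hx : x ≠ 0) (h : wedge x y = 0) :
    ∃ c : ℝ, y = c • x := by
  have hx2 : x.1 ^ 2 + x.2 ^ 2 ≠ 0 := by
    contrapose! hx
    ext <;> simp only [Prod.fst_zero, Prod.snd_zero] <;> nlinarith [sq_nonneg x.1, sq_nonneg x.2]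
  refine ⟨(x.1 * y.1 + x.2 * y.2) / (x.1 ^ 2 + x.2 ^ 2), ?_⟩
  simp only [wedge] at h
  ext <;> simp only [Prod.smul_fst, Prod.smul_snd, smul_eq_mul] <;> field_simp
  · linear_combination -x.2 * h
  · linear_combination x.1 * h

namespace IsNorm

variable {N : ℝ × ℝ → ℝ} (hN : IsNorm N)
include hN

lemma map_zero : N 0 = 0 := (hN.1 0).2 rfl

lemma nonneg_s12 (p : ℝ × ℝ) : 0 ≤ N p := by
  have h := hN.2.2 p (-p)
  rw [add_neg_cancel, hN.map_zero, ← neg_one_smul ℝ p, hN.2.1] at h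
  norm_num at h
  linarith

lemma ne_zero_of_eq_one {p : ℝ × ℝ} (hp : N p = 1) : p ≠ 0 := by
  rintro rfl
  simp [hN.map_zero] at hp

lemma abs_eq_one_of_smul {p : ℝ × ℝ} {c : ℝ} (hp : N p = 1) (hcp : N (c • p) = 1) : |c| = 1 := by
  simpa [hN.2.1, hp] using hcp

lemma convexOn : ConvexOn ℝ univ N := by
  refine ⟨convex_univ, fun x _ y _ a b ha hb _ => ?_⟩
  calc N (a • x + b • y) ≤ N (a • x) + N (b • y) := hN.2.2 _ _
    _ = a • N x + b • N y := by rw [hN.2.1, hN.2.1, abs_of_nonneg ha, abs_of_nonneg hb]; rfl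

lemma continuous : Continuous N :=
  continuousOn_univ.mp (hN.convexOn.continuousOn isOpen_univ)

lemma convexOn_chord (x y : ℝ × ℝ) : ConvexOn ℝ univ fun t : ℝ => N ((1 - t) • x + t • y) := by
  simpa [Function.comp_def, AffineMap.lineMap_apply_module] using
    hN.convexOn.comp_affineMap (AffineMap.lineMap x y)

lemma isCompact_chord_image (x y : ℝ × ℝ) :
    IsCompact ((fun t : ℝ => N ((1 - t) • x + t • y)) '' Icc 0 1) :=
  isCompact_Icc.image (hN.continuous.comp (by fun_prop))

lemma segInf_le {x y : ℝ × ℝ} {t : ℝ} (ht : t ∈ Icc (0 : ℝ) 1) :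
    segInf N x y ≤ N ((1 - t) • x + t • y) :=
  csInf_le (hN.isCompact_chord_image x y).bddBelow ⟨t, ht, rfl⟩

lemma exists_eq_segInf (x y : ℝ × ℝ) :
    ∃ t ∈ Icc (0 : ℝ) 1, N ((1 - t) • x + t • y) = segInf N x y :=
  (hN.isCompact_chord_image x y).sInf_mem ((nonempty_Icc.2 zero_le_one).image _)

end IsNorm

section Chord

variable {N : ℝ × ℝ → ℝ} (hN : IsNorm N) {ρ : ℝ} {x y : ℝ × ℝ}
  (hx : N x = 1) (hy : N y = 1) (hseg : segInf N x y = ρ)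
include hN hx hy hseg

lemma le_norm_chord (b : ℝ) : ρ ≤ N ((1 - b) • x + b • y) := by
  set g := fun t : ℝ => N ((1 - t) • x + t • y)
  have hg := hN.convexOn_chord x y
  have hg0 : g 0 = 1 := by simp [g, hx]
  have hg1 : g 1 = 1 := by simp [g, hy]
  have hρ : ρ ≤ 1 := hg0 ▸ hseg ▸ hN.segInf_le (left_mem_Icc.2 zero_le_one)
  change ρ ≤ g b
  rcases lt_or_ge b 0 with hb | hb
  · have := hg.le_left_of_right_le (mem_univ b) (mem_univ 1)
      (by rw [openSegment_eq_Ioo (by linarith)]; exact ⟨hb, one_pos⟩) (hg1.trans hg0.symm).le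
    linarith
  rcases le_or_gt b 1 with hb1 | hb1
  · exact hseg ▸ hN.segInf_le ⟨hb, hb1⟩
  · have := hg.le_right_of_left_le (mem_univ 0) (mem_univ b)
      (by rw [openSegment_eq_Ioo (by linarith)]; exact ⟨one_pos, hb1⟩) (hg0.trans hg1.symm).le
    linarith

lemma norm_chord_lt_one (hρ : ρ < 1) {t : ℝ} (ht : t ∈ Ioo (0 : ℝ) 1) :
    N ((1 - t) • x + t • y) < 1 := by
  set g := fun t : ℝ => N ((1 - t) • x + t • y)
  have hg := hN.convexOn_chord x y
  have hg0 : g 0 = 1 := by simp [g, hx]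
  have hg1 : g 1 = 1 := by simp [g, hy]
  obtain ⟨t₀, ht₀, hmin⟩ := hN.exists_eq_segInf x y
  change g t < 1
  rcases le_or_gt (g t) (g t₀) with h | h
  · linarith [hmin.trans hseg]
  rcases lt_or_gt_of_ne (show t ≠ t₀ by rintro rfl; exact lt_irrefl _ h) with htt | htt
  · exact hg0 ▸ hg.lt_left_of_right_lt (mem_univ 0) (mem_univ t₀)
      (by rw [openSegment_eq_Ioo (ht.1.trans htt)]; exact ⟨ht.1, htt⟩) h
  · exact hg1 ▸ hg.lt_right_of_left_lt (mem_univ t₀) (mem_univ 1)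
      (by rw [openSegment_eq_Ioo (htt.trans ht.2)]; exact ⟨htt, ht.2⟩) h

lemma wedge_add_wedge_le (hw : 0 < wedge x y) {q : ℝ × ℝ} (hq : N q ≤ ρ) :
    wedge x q + wedge q y ≤ wedge x y := by
  by_contra! hF
  set D := wedge x y
  set F := wedge x q + wedge q y
  have hF0 : 0 < F := hw.trans hF
  have hNq : 0 < N q := by
    refine (hN.nonneg_s12 q).lt_of_ne fun h => ?_
    rw [eq_comm, hN.1] at h
    simp [F, h, wedge] at hF0
  -- `(D / F) • q` lies on the line through `x` and `y`, with smaller norm than `q`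
  set b := wedge x q / F
  have hline : (D / F) • q = (1 - b) • x + b • y := by
    ext <;> simp only [b, Prod.fst_add, Prod.snd_add, Prod.smul_fst, Prod.smul_snd, smul_eq_mul] <;>
      field_simp <;> simp only [F, D, wedge] <;> ring
  have h := le_norm_chord hN hx hy hseg b
  rw [← hline, hN.2.1, abs_of_pos (div_pos hw hF0)] at h
  have : D / F * N q < N q := mul_lt_of_lt_one_left hNq ((div_lt_one hF0).2 hF)
  linarith

lemma lt_wedge_add_wedge (hρ : ρ < 1) (hw : 0 < wedge x y) {z : ℝ × ℝ} (hz : N z = 1)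
    (hxz : 0 < wedge x z) (hzy : 0 < wedge z y) : wedge x y < wedge x z + wedge z y := by
  set a := wedge z y / wedge x y
  set b := wedge x z / wedge x y
  have ha : 0 < a := div_pos hzy hw
  have hb : 0 < b := div_pos hxz hw
  have hz_eq : z = a • x + b • y := eq_smul_add_smul_of_wedge_ne_zero hw.ne' z
  have hle : 1 ≤ a + b :=
    calc 1 = N (a • x + b • y) := hz_eq ▸ hz.symm
      _ ≤ N (a • x) + N (b • y) := hN.2.2 _ _
      _ = a + b := by rw [hN.2.1, hN.2.1, hx, hy, abs_of_pos ha, abs_of_pos hb, mul_one, mul_one]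
  -- `a + b = 1` would put `z` in the interior of the chord, where `N < 1`
  have hne : a + b ≠ 1 := fun h => by
    have := norm_chord_lt_one hN hx hy hseg hρ ⟨hb, by linarith⟩
    rw [show 1 - b = a by linarith, ← hz_eq, hz] at this
    exact lt_irrefl _ this
  have hab : a + b = (wedge x z + wedge z y) / wedge x y := by simp only [a, b]; ring
  exact (one_lt_div hw).1 (hab ▸ lt_of_le_of_ne hle hne.symm)

lemma wedge_nonpos_of_nested_chord (hρ : ρ < 1) (hw : 0 < wedge x y) {z z' : ℝ × ℝ}
    (hz : N z = 1) (hz' : N z' = 1) (hsegz : segInf N z z' = ρ)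
    (hxz : 0 < wedge x z) (hzy : 0 < wedge z y) (hz'y : 0 < wedge z' y) : wedge x z' ≤ 0 := by
  by_contra! hxz'
  obtain ⟨t, ⟨ht0, ht1⟩, hq⟩ := hN.exists_eq_segInf z z'
  have hlin : wedge x ((1 - t) • z + t • z') + wedge ((1 - t) • z + t • z') y =
      (1 - t) * (wedge x z + wedge z y) + t * (wedge x z' + wedge z' y) := by
    simp only [wedge, Prod.fst_add, Prod.snd_add, Prod.smul_fst, Prod.smul_snd, smul_eq_mul]; ring
  have hle := wedge_add_wedge_le hN hx hy hseg hw (hq.trans hsegz).le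
  have h₁ := lt_wedge_add_wedge hN hx hy hseg hρ hw hz hxz hzy
  have h₂ := lt_wedge_add_wedge hN hx hy hseg hρ hw hz' hxz' hz'y
  have hcombo := (lt_min h₁ h₂).trans_le
    (Convex.min_le_combo _ _ (sub_nonneg.2 ht1) ht0 (sub_add_cancel 1 t))
  rw [smul_eq_mul, smul_eq_mul, ← hlin] at hcombo
  exact hle.not_gt hcombo

lemma eq_or_wedge_pos_of_between (hρ : ρ < 1) (hw : 0 < wedge x y) {z z' : ℝ × ℝ}
    (hz : N z = 1) (hz' : N z' = 1) (hwz : 0 < wedge z z') (hsegz : segInf N z z' = ρ)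
    (hxz : 0 < wedge x z) (hzy : 0 < wedge z y) : z' = y ∨ 0 < wedge y z' := by
  rcases lt_trichotomy (wedge y z') 0 with hneg | hzero | hpos
  · have hz'y : 0 < wedge z' y := by simp only [wedge] at hneg ⊢; linarith
    have hxz' := wedge_nonpos_of_nested_chord hN hx hy hseg hρ hw hz hz' hsegz hxz hzy hz'y
    have := wedge_pluecker x z z' y
    nlinarith [mul_pos hxz hz'y, mul_pos hw hwz, mul_nonpos_of_nonpos_of_nonneg hxz' hzy.le]
  · obtain ⟨c, rfl⟩ := exists_eq_smul_of_wedge_eq_zero (hN.ne_zero_of_eq_one hy) hzero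
    have hc : 0 < c := by
      have : wedge z (c • y) = c * wedge z y := by
        simp only [wedge, Prod.smul_fst, Prod.smul_snd, smul_eq_mul]; ring
      exact pos_of_mul_pos_left (this ▸ hwz) hzy.le
    have := hN.abs_eq_one_of_smul hy hz'
    rw [abs_of_pos hc] at this
    simp [this]
  · exact Or.inr hpos

end Chord

noncomputable def polarAngle (p : ℝ × ℝ) : ℝ := Complex.arg ⟨p.1, p.2⟩

/-- The counterclockwise angle from the ray through `p` to the ray through `q`, taken in
`(0, 2π]`, so that it is `2π` (not `0`) from a ray to itself. -/
noncomputable def ccwAngle (p q : ℝ × ℝ) : ℝ :=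
  toIocMod two_pi_pos 0 (polarAngle q - polarAngle p)

lemma polarAngle_mem_Ioc (p : ℝ × ℝ) : polarAngle p ∈ Ioc (-π) π :=
  ⟨Complex.neg_pi_lt_arg _, Complex.arg_le_pi _⟩

lemma ccwAngle_mem_Ioc (p q : ℝ × ℝ) : ccwAngle p q ∈ Ioc 0 (2 * π) := by
  simpa [ccwAngle] using toIocMod_mem_Ioc two_pi_pos 0 (polarAngle q - polarAngle p)

lemma ccwAngle_eq_iff {p q : ℝ × ℝ} {c : ℝ} : ccwAngle p q = c ↔
    c ∈ Ioc 0 (2 * π) ∧ ∃ k : ℤ, polarAngle q - polarAngle p = c + k • (2 * π) := by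
  rw [ccwAngle, toIocMod_eq_iff, zero_add]

lemma exists_polarAngle_sub_eq (p q : ℝ × ℝ) :
    ∃ k : ℤ, polarAngle q - polarAngle p = ccwAngle p q + k • (2 * π) :=
  (ccwAngle_eq_iff.1 rfl).2

lemma ccwAngle_self (p : ℝ × ℝ) : ccwAngle p p = 2 * π := by
  rw [ccwAngle, sub_self, toIocMod_apply_left, zero_add]

lemma polarAngle_eq_of_ccwAngle_eq {p q r : ℝ × ℝ} (h : ccwAngle p q = ccwAngle p r) :
    polarAngle q = polarAngle r := by
  obtain ⟨n, hn⟩ := (toIocMod_eq_toIocMod _).1 h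
  have hn' : (n : ℝ) * (2 * π) = polarAngle r - polarAngle q := by
    rw [← zsmul_eq_mul, ← hn]; ring
  have hq := polarAngle_mem_Ioc q
  have hr := polarAngle_mem_Ioc r
  have h1 : (n : ℝ) < 1 := by nlinarith [pi_pos, hq.1, hr.2]
  have h2 : (-1 : ℝ) < n := by nlinarith [pi_pos, hq.2, hr.1]
  have hn0 : n = 0 := by
    have h1' : n < 1 := by exact_mod_cast h1
    have h2' : -1 < n := by exact_mod_cast h2
    omega
  rw [hn0, Int.cast_zero, zero_mul] at hn'
  linarith

lemma ccwAngle_lt_two_pi {p q : ℝ × ℝ} (h : polarAngle p ≠ polarAngle q) :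
    ccwAngle p q < 2 * π := by
  refine (ccwAngle_mem_Ioc p q).2.lt_of_ne fun h' => h ?_
  rw [← ccwAngle_self p] at h'
  exact (polarAngle_eq_of_ccwAngle_eq h').symm

lemma ccwAngle_add_of_le {p q r : ℝ × ℝ} (h : ccwAngle p q + ccwAngle q r ≤ 2 * π) :
    ccwAngle p r = ccwAngle p q + ccwAngle q r := by
  obtain ⟨k, hk⟩ := exists_polarAngle_sub_eq p q
  obtain ⟨l, hl⟩ := exists_polarAngle_sub_eq q r
  refine ccwAngle_eq_iff.2 ⟨⟨add_pos (ccwAngle_mem_Ioc p q).1 (ccwAngle_mem_Ioc q r).1, h⟩,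
    k + l, ?_⟩
  rw [add_zsmul]
  linear_combination hk + hl

lemma ccwAngle_eq_sub_of_lt {p q r : ℝ × ℝ} (h : ccwAngle p q < ccwAngle p r) :
    ccwAngle q r = ccwAngle p r - ccwAngle p q := by
  obtain ⟨k, hk⟩ := exists_polarAngle_sub_eq p q
  obtain ⟨l, hl⟩ := exists_polarAngle_sub_eq p r
  refine ccwAngle_eq_iff.2 ⟨⟨sub_pos.2 h, ?_⟩, l - k, ?_⟩
  · linarith [(ccwAngle_mem_Ioc p r).2, (ccwAngle_mem_Ioc p q).1]
  · rw [sub_zsmul]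
    linear_combination hl - hk

lemma ccwAngle_add_ccwAngle {p q : ℝ × ℝ} (h : polarAngle p ≠ polarAngle q) :
    ccwAngle p q + ccwAngle q p = 2 * π := by
  rw [ccwAngle_eq_sub_of_lt (r := p) ((ccwAngle_self p).symm ▸ ccwAngle_lt_two_pi h),
    ccwAngle_self]
  ring

lemma complex_mk_ne_zero {p : ℝ × ℝ} (hp : p ≠ 0) : (⟨p.1, p.2⟩ : ℂ) ≠ 0 := by
  simpa [Complex.ext_iff, Prod.ext_iff] using hp

lemma wedge_eq_norm_mul_norm_mul_sin (p q : ℝ × ℝ) :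
    wedge p q = ‖(⟨p.1, p.2⟩ : ℂ)‖ * ‖(⟨q.1, q.2⟩ : ℂ)‖ * sin (polarAngle q - polarAngle p) := by
  have hp1 := Complex.norm_mul_cos_arg ⟨p.1, p.2⟩
  have hp2 := Complex.norm_mul_sin_arg ⟨p.1, p.2⟩
  have hq1 := Complex.norm_mul_cos_arg ⟨q.1, q.2⟩
  have hq2 := Complex.norm_mul_sin_arg ⟨q.1, q.2⟩
  rw [wedge, sin_sub, polarAngle, polarAngle]
  linear_combination (-(q.2 : ℝ)) * hp1 + q.1 * hp2
    - ‖(⟨p.1, p.2⟩ : ℂ)‖ * cos (Complex.arg ⟨p.1, p.2⟩) * hq2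
    + ‖(⟨p.1, p.2⟩ : ℂ)‖ * sin (Complex.arg ⟨p.1, p.2⟩) * hq1

lemma sin_pos_iff_lt_pi_of_mem_Ioc {θ : ℝ} (hθ : θ ∈ Ioc 0 (2 * π)) : 0 < sin θ ↔ θ < π := by
  refine ⟨fun hs => not_le.1 fun hπ => ?_, sin_pos_of_pos_of_lt_pi hθ.1⟩
  have := sin_nonneg_of_nonneg_of_le_pi (sub_nonneg.2 hπ) (by linarith [hθ.2])
  rw [sin_sub_pi] at this
  linarith

lemma wedge_pos_iff_ccwAngle_lt_pi {p q : ℝ × ℝ} (hp : p ≠ 0) (hq : q ≠ 0) :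
    0 < wedge p q ↔ ccwAngle p q < π := by
  obtain ⟨k, hk⟩ := exists_polarAngle_sub_eq p q
  rw [wedge_eq_norm_mul_norm_mul_sin, hk, zsmul_eq_mul, sin_add_int_mul_two_pi,
    mul_pos_iff_of_pos_left
      (mul_pos (norm_pos_iff.2 (complex_mk_ne_zero hp)) (norm_pos_iff.2 (complex_mk_ne_zero hq)))]
  exact sin_pos_iff_lt_pi_of_mem_Ioc (ccwAngle_mem_Ioc p q)

lemma IsNorm.injOn_polarAngle {N : ℝ × ℝ → ℝ} (hN : IsNorm N) :
    InjOn polarAngle {p | N p = 1} := by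
  intro p hp q hq h
  have hp0 := complex_mk_ne_zero (hN.ne_zero_of_eq_one hp)
  have hq0 := complex_mk_ne_zero (hN.ne_zero_of_eq_one hq)
  set c := ‖(⟨q.1, q.2⟩ : ℂ)‖ / ‖(⟨p.1, p.2⟩ : ℂ)‖
  have hc : 0 < c := div_pos (norm_pos_iff.2 hq0) (norm_pos_iff.2 hp0)
  have hqc : q = c • p := by
    have := Complex.ext_iff.1 ((Complex.arg_eq_arg_iff hp0 hq0).1 h)
    push_cast [Complex.mul_re, Complex.mul_im] at this
    ext
    · simpa [c] using this.1.symm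
    · simpa [c] using this.2.symm
  have hc1 := hN.abs_eq_one_of_smul hp (hqc ▸ hq)
  rw [abs_of_pos hc] at hc1
  rw [hqc, hc1, one_smul]

/-- The points of `W` strictly inside the counterclockwise arc from `x` to `z`
(`x` itself is never one of them, as `ccwAngle x x = 2π`). -/
noncomputable def arcPoints (W : Finset (ℝ × ℝ)) (x z : ℝ × ℝ) : Finset (ℝ × ℝ) :=
  W.filter fun y => ccwAngle x y < ccwAngle x z

lemma mem_arcPoints {W : Finset (ℝ × ℝ)} {x y z : ℝ × ℝ} :
    y ∈ arcPoints W x z ↔ y ∈ W ∧ ccwAngle x y < ccwAngle x z :=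
  Finset.mem_filter

lemma ccwAngle_le_of_arcPoints_eq_empty {W : Finset (ℝ × ℝ)} {x y z : ℝ × ℝ}
    (h : arcPoints W x z = ∅) (hy : y ∈ W) : ccwAngle x z ≤ ccwAngle x y :=
  not_lt.1 fun hlt => Finset.notMem_empty y (h ▸ mem_arcPoints.2 ⟨hy, hlt⟩)

lemma exists_arcPoints_eq_empty {W : Finset (ℝ × ℝ)} {x : ℝ × ℝ} (hx : x ∈ W) :
    ∃ y ∈ W, arcPoints W x y = ∅ := by
  obtain ⟨y, hy, hmin⟩ := W.exists_min_image (ccwAngle x) ⟨x, hx⟩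
  exact ⟨y, hy, Finset.eq_empty_of_forall_notMem fun z hz =>
    (hmin z (mem_arcPoints.1 hz).1).not_gt (mem_arcPoints.1 hz).2⟩

section InjOnPolarAngle

variable {W : Finset (ℝ × ℝ)} (hW : InjOn polarAngle W)
include hW

lemma eq_of_arcPoints_eq_empty {x y y' : ℝ × ℝ} (hy : y ∈ W) (hy' : y' ∈ W)
    (h : arcPoints W x y = ∅) (h' : arcPoints W x y' = ∅) : y = y' :=
  hW hy hy' (polarAngle_eq_of_ccwAngle_eq
    ((ccwAngle_le_of_arcPoints_eq_empty h hy').antisymm (ccwAngle_le_of_arcPoints_eq_empty h' hy)))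

/-- Repeatedly stepping to the next point of `W` reaches every point of `W`: otherwise the visited
point closest (counterclockwise) to a missed point would have its successor even closer. -/
lemma exists_iterate_eq_of_arcPoints_eq_empty {σ : ℝ × ℝ → ℝ × ℝ} (hσW : MapsTo σ W W)
    (hσ : ∀ x ∈ W, arcPoints W x (σ x) = ∅) {x y : ℝ × ℝ} (hx : x ∈ W) (hy : y ∈ W) :
    ∃ k, σ^[k] x = y := by
  classical
  by_contra! hxy
  obtain ⟨z, hz, hmin⟩ := (W.filter fun z => ∃ k, σ^[k] x = z).exists_min_image
    (ccwAngle · y) ⟨x, Finset.mem_filter.2 ⟨hx, 0, rfl⟩⟩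
  obtain ⟨hzW, k, rfl⟩ := Finset.mem_filter.1 hz
  have hσz : σ (σ^[k] x) ∈ W.filter fun z => ∃ k, σ^[k] x = z :=
    Finset.mem_filter.2 ⟨hσW hzW, k + 1, Function.iterate_succ_apply' σ k x⟩
  have hlt : ccwAngle (σ^[k] x) (σ (σ^[k] x)) < ccwAngle (σ^[k] x) y := by
    refine (ccwAngle_le_of_arcPoints_eq_empty (hσ _ hzW) hy).lt_of_ne fun h => hxy (k + 1) ?_
    rw [Function.iterate_succ_apply']
    exact hW (hσW hzW) hy (polarAngle_eq_of_ccwAngle_eq h)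
  have := hmin _ hσz
  rw [ccwAngle_eq_sub_of_lt hlt] at this
  linarith [(ccwAngle_mem_Ioc (σ^[k] x) (σ (σ^[k] x))).1]

end InjOnPolarAngle

/-- `f` moves the points of `W` counterclockwise by less than half a turn without locally reversing
their cyclic order. -/
structure IsMonotoneStepOn (f : ℝ × ℝ → ℝ × ℝ) (W : Finset (ℝ × ℝ)) : Prop where
  mapsTo : MapsTo f W W
  injOn : InjOn f W
  ccwAngle_lt_pi : ∀ x ∈ W, ccwAngle x (f x) < π
  eq_or_ccwAngle_lt_pi : ∀ x ∈ W, ∀ y ∈ W, ccwAngle x y < π → ccwAngle y (f x) < π →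
    f y = f x ∨ ccwAngle (f x) (f y) < π

namespace IsMonotoneStepOn

variable {f : ℝ × ℝ → ℝ × ℝ} {W : Finset (ℝ × ℝ)} (hf : IsMonotoneStepOn f W)
include hf

lemma image_eq : W.image f = W :=
  Finset.eq_of_subset_of_card_le (Finset.image_subset_iff.2 hf.mapsTo)
    (Finset.card_image_of_injOn hf.injOn).ge

lemma mapsTo_arcPoints {x y : ℝ × ℝ} (hx : x ∈ W) (hy : y ∈ arcPoints W x (f x)) :
    f y ∈ arcPoints W (f x) (f (f x)) := by
  obtain ⟨hyW, hxy⟩ := mem_arcPoints.1 hy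
  have hfx := hf.mapsTo hx
  have hxfx := hf.ccwAngle_lt_pi x hx
  have hyx : y ≠ x := by
    rintro rfl
    linarith [ccwAngle_self y, pi_pos]
  have hyfx : ccwAngle y (f x) < π := by
    rw [ccwAngle_eq_sub_of_lt hxy]
    linarith [(ccwAngle_mem_Ioc x y).1]
  have hfxfy : ccwAngle (f x) (f y) < π :=
    (hf.eq_or_ccwAngle_lt_pi x hx y hyW (hxy.trans hxfx) hyfx).resolve_left
      fun h => hyx (hf.injOn hyW hx h)
  have hfyffx : ccwAngle (f y) (f (f x)) < π := by
    refine (hf.eq_or_ccwAngle_lt_pi y hyW (f x) hfx hyfx hfxfy).resolve_left fun h => ?_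
    rw [hf.injOn hfx hyW h] at hxy
    exact lt_irrefl _ hxy
  refine mem_arcPoints.2 ⟨hf.mapsTo hyW, ?_⟩
  rw [ccwAngle_add_of_le (q := f y) (r := f (f x)) (by linarith [pi_pos])]
  linarith [(ccwAngle_mem_Ioc (f y) (f (f x))).1]

/-- Since `f` permutes `W` and never decreases the number of points of `W` inside the arc
from `x` to `f x`, that number is invariant. -/
lemma image_arcPoints {x : ℝ × ℝ} (hx : x ∈ W) :
    (arcPoints W x (f x)).image f = arcPoints W (f x) (f (f x)) := by
  have hsub : ∀ x ∈ W, (arcPoints W x (f x)).image f ⊆ arcPoints W (f x) (f (f x)) :=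
    fun x hx => Finset.image_subset_iff.2 fun y hy => hf.mapsTo_arcPoints hx hy
  have hcard : ∀ x ∈ W, ((arcPoints W x (f x)).image f).card = (arcPoints W x (f x)).card :=
    fun x _ => Finset.card_image_of_injOn (hf.injOn.mono (Finset.filter_subset _ W))
  have hle : ∀ x ∈ W, (arcPoints W x (f x)).card ≤ (arcPoints W (f x) (f (f x))).card :=
    fun x hx => hcard x hx ▸ Finset.card_le_card (hsub x hx)
  have hsum : ∑ x ∈ W, (arcPoints W (f x) (f (f x))).card =
      ∑ x ∈ W, (arcPoints W x (f x)).card := by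
    rw [← Finset.sum_image (f := fun y => (arcPoints W y (f y)).card)
      fun x hx y hy h => hf.injOn hx hy h, hf.image_eq]
  exact Finset.eq_of_subset_of_card_le (hsub x hx)
    ((hcard x hx).symm ▸ ((Finset.sum_eq_sum_iff_of_le hle).1 hsum.symm x hx).ge)

lemma mem_arcPoints_of_ccwAngle_lt {x y q : ℝ × ℝ} (hx : x ∈ W) (hy : y ∈ arcPoints W x (f x))
    (hq : q ∈ arcPoints W x (f x)) (hyq : ccwAngle x y < ccwAngle x q) :
    q ∈ arcPoints W y (f y) := by
  obtain ⟨-, hxy⟩ := mem_arcPoints.1 hy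
  obtain ⟨hqW, hxq⟩ := mem_arcPoints.1 hq
  obtain ⟨-, hfxfy⟩ := mem_arcPoints.1 (hf.mapsTo_arcPoints hx hy)
  have hyfx : ccwAngle y (f x) = ccwAngle x (f x) - ccwAngle x y := ccwAngle_eq_sub_of_lt hxy
  have hyfy : ccwAngle y (f y) = ccwAngle y (f x) + ccwAngle (f x) (f y) :=
    ccwAngle_add_of_le (by linarith [hf.ccwAngle_lt_pi x hx, hf.ccwAngle_lt_pi (f x) (hf.mapsTo hx),
      (ccwAngle_mem_Ioc x y).1])
  refine mem_arcPoints.2 ⟨hqW, ?_⟩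
  rw [ccwAngle_eq_sub_of_lt hyq, hyfy, hyfx]
  linarith [(ccwAngle_mem_Ioc (f x) (f y)).1]

/-- `f` maps the successor of `x` in the cyclic order of `W` to the successor of `f x`. -/
lemma arcPoints_apply_eq_empty (hW : InjOn polarAngle W) {x y : ℝ × ℝ} (hx : x ∈ W)
    (hy : y ∈ W) (hxy : arcPoints W x y = ∅) : arcPoints W (f x) (f y) = ∅ := by
  have hfx := hf.mapsTo hx
  rcases (ccwAngle_le_of_arcPoints_eq_empty hxy hfx).eq_or_lt with h | h
  · obtain rfl := hW hy hfx (polarAngle_eq_of_ccwAngle_eq h)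
    rw [← hf.image_arcPoints hx, hxy, Finset.image_empty]
  have hyA : y ∈ arcPoints W x (f x) := mem_arcPoints.2 ⟨hy, h⟩
  obtain ⟨hfyW, hfy⟩ := mem_arcPoints.1 (hf.mapsTo_arcPoints hx hyA)
  refine Finset.eq_empty_of_forall_notMem fun z hz => ?_
  obtain ⟨hzW, hz⟩ := mem_arcPoints.1 hz
  obtain ⟨q, hqA, rfl⟩ := Finset.mem_image.1
    ((hf.image_arcPoints hx).symm ▸ mem_arcPoints.2 ⟨hzW, hz.trans hfy⟩)
  have hqW := (mem_arcPoints.1 hqA).1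
  have hyq : ccwAngle x y < ccwAngle x q := by
    refine (ccwAngle_le_of_arcPoints_eq_empty hxy hqW).lt_of_ne fun h => ?_
    rw [hW hy hqW (polarAngle_eq_of_ccwAngle_eq h)] at hz
    exact lt_irrefl _ hz
  obtain ⟨-, hfq⟩ :=
    mem_arcPoints.1 (hf.mapsTo_arcPoints hy (hf.mem_arcPoints_of_ccwAngle_lt hx hyA hqA hyq))
  -- `f q` lies less than half a turn after `f y` and also less than half a turn before it
  have hsum := ccwAngle_add_ccwAngle (hW.ne hfyW (hf.mapsTo hqW)
    (hf.injOn.ne hy hqW (ne_of_lt hyq ∘ congrArg (ccwAngle x))))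
  rw [ccwAngle_eq_sub_of_lt hz] at hsum
  linarith [hf.ccwAngle_lt_pi _ hfyW, hf.ccwAngle_lt_pi _ hfx, (ccwAngle_mem_Ioc (f x) (f q)).1]

theorem iterate_eq_self (hW : InjOn polarAngle W) {u : ℝ × ℝ} (hu : u ∈ W) {n : ℕ}
    (hn : f^[n] u = u) {y : ℝ × ℝ} (hy : y ∈ W) : f^[n] y = y := by
  choose! σ hσW hσ using fun x (hx : x ∈ W) => exists_arcPoints_eq_empty hx
  have hcomm : ∀ x ∈ W, f (σ x) = σ (f x) := fun x hx =>
    eq_of_arcPoints_eq_empty hW (hf.mapsTo (hσW x hx)) (hσW _ (hf.mapsTo hx))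
      (hf.arcPoints_apply_eq_empty hW hx (hσW x hx) (hσ x hx)) (hσ _ (hf.mapsTo hx))
  have hcomm_iter : ∀ k, ∀ x ∈ W, f^[k] (σ x) = σ (f^[k] x) := by
    intro k
    induction k with
    | zero => simp
    | succ k ih =>
      intro x hx
      rw [Function.iterate_succ_apply', Function.iterate_succ_apply', ih x hx,
        hcomm _ (hf.mapsTo.iterate k hx)]
  have hfix : ∀ k, f^[n] (σ^[k] u) = σ^[k] u := by
    intro k
    induction k with
    | zero => exact hn
    | succ k ih =>
      rw [Function.iterate_succ_apply', hcomm_iter n _ ((MapsTo.iterate hσW k) hu), ih]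
  obtain ⟨k, rfl⟩ := exists_iterate_eq_of_arcPoints_eq_empty hW hσW hσ hu hy
  exact hfix k

end IsMonotoneStepOn

lemma isMonotoneStepOn_of_segInf_eq {N : ℝ × ℝ → ℝ} (hN : IsNorm N) {ρ : ℝ} (hρ : ρ < 1)
    {star : ℝ × ℝ → ℝ × ℝ}
    (hstar : ∀ x, N x = 1 → N (star x) = 1 ∧ 0 < wedge x (star x) ∧ segInf N x (star x) = ρ)
    {W : Finset (ℝ × ℝ)} (hWS : ∀ x ∈ W, N x = 1) (hmaps : MapsTo star W W)
    (hinj : InjOn star W) : IsMonotoneStepOn star W where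
  mapsTo := hmaps
  injOn := hinj
  ccwAngle_lt_pi x hx :=
    (wedge_pos_iff_ccwAngle_lt_pi (hN.ne_zero_of_eq_one (hWS x hx))
      (hN.ne_zero_of_eq_one (hWS _ (hmaps hx)))).1 (hstar x (hWS x hx)).2.1
  eq_or_ccwAngle_lt_pi x hx y hy hxy hyx := by
    have hne : ∀ p ∈ W, p ≠ 0 := fun p hp => hN.ne_zero_of_eq_one (hWS p hp)
    obtain ⟨hx₁, hwx, hsegx⟩ := hstar x (hWS x hx)
    obtain ⟨hy₁, hwy, hsegy⟩ := hstar y (hWS y hy)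
    rw [← wedge_pos_iff_ccwAngle_lt_pi (hne x hx) (hne y hy)] at hxy
    rw [← wedge_pos_iff_ccwAngle_lt_pi (hne y hy) (hne _ (hmaps hx))] at hyx
    rw [← wedge_pos_iff_ccwAngle_lt_pi (hne _ (hmaps hx)) (hne _ (hmaps hy))]
    exact eq_or_wedge_pos_of_between hN (hWS x hx) hx₁ hsegx hρ hwx (hWS y hy) hy₁ hwy hsegy hxy hyx

lemma Function.IsPeriodicPt.iterate_mem_image_range {α : Type*} [DecidableEq α] {f : α → α}
    {n : ℕ} {x : α} (hx : IsPeriodicPt f n x) (hn : 0 < n) (k : ℕ) :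
    f^[k] x ∈ (Finset.range n).image (f^[·] x) :=
  Finset.mem_image.2 ⟨k % n, Finset.mem_range.2 (Nat.mod_lt _ hn), hx.iterate_mod_apply k⟩

theorem stmt_12_general (N : ℝ × ℝ → ℝ) (hN : IsNorm N) (ρ : ℝ) (hρ1 : ρ < 1)
    (star : ℝ × ℝ → ℝ × ℝ)
    (hstar : ∀ u : ℝ × ℝ, N u = 1 →
      (N (star u) = 1 ∧ 0 < wedge u (star u) ∧ segInf N u (star u) = ρ) ∧
      ∀ w : ℝ × ℝ, N w = 1 → 0 < wedge u w → segInf N u w = ρ → w = star u)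
    (u v : ℝ × ℝ) (hu : N u = 1) (hv : N v = 1) (n m : ℕ) (hn : 0 < n) (hm : 0 < m)
    (hpu : star^[n] u = u) (hnmin : ∀ i : ℕ, 0 < i → i < n → star^[i] u ≠ u)
    (hpv : star^[m] v = v) (hmmin : ∀ i : ℕ, 0 < i → i < m → star^[i] v ≠ v) :
    n = m := by
  have hu' : Function.IsPeriodicPt star n u := hpu
  have hv' : Function.IsPeriodicPt star m v := hpv
  have hS : MapsTo star {p | N p = 1} {p | N p = 1} := fun p hp => (hstar p hp).1.1
  set W := (Finset.range n).image (star^[·] u) ∪ (Finset.range m).image (star^[·] v)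
  have hW : ∀ x ∈ W, star x ∈ W ∧ N x = 1 ∧ Function.IsPeriodicPt star (n * m) x := by
    rintro x hx
    rcases Finset.mem_union.1 hx with hx | hx <;> obtain ⟨i, -, rfl⟩ := Finset.mem_image.1 hx
    · refine ⟨Finset.mem_union_left _ ?_, hS.iterate i hu, (hu'.apply_iterate i).mul_const m⟩
      rw [← Function.iterate_succ_apply' star i u]
      exact hu'.iterate_mem_image_range hn _
    · refine ⟨Finset.mem_union_right _ ?_, hS.iterate i hv, (hv'.apply_iterate i).const_mul n⟩
      rw [← Function.iterate_succ_apply' star i v]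
      exact hv'.iterate_mem_image_range hm _
  have hstep : IsMonotoneStepOn star W :=
    isMonotoneStepOn_of_segInf_eq hN hρ1 (fun x hx => (hstar x hx).1) (fun x hx => (hW x hx).2.1)
      (fun x hx => (hW x hx).1)
      (fun x hx y hy => (hW x hx).2.2.eq_of_apply_eq_same (hW y hy).2.2 (Nat.mul_pos hn hm))
  have hang : InjOn polarAngle W := hN.injOn_polarAngle.mono fun x hx => (hW x hx).2.1
  have huW : u ∈ W := Finset.mem_union_left _ (hu'.iterate_mem_image_range hn 0)
  have hvW : v ∈ W := Finset.mem_union_right _ (hv'.iterate_mem_image_range hm 0)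
  by_contra hne
  rcases lt_or_gt_of_ne hne with h | h
  · exact hmmin n hn h (hstep.iterate_eq_self hang huW hpu hvW)
  · exact hnmin m hm h (hstep.iterate_eq_self hang hvW hpv huW)

/-- If `u, v ∈ S` both generate finite ρ-polygons, then the polygons
have the same number of vertices (the minimal periods coincide). -/
theorem stmt_12 (N : ℝ × ℝ → ℝ) (hN : IsNorm N) (ρ : ℝ) (hρ0 : 0 < ρ) (hρ1 : ρ < 1)
    (star : ℝ × ℝ → ℝ × ℝ)
    (hstar : ∀ u : ℝ × ℝ, N u = 1 →
      (N (star u) = 1 ∧ 0 < wedge u (star u) ∧ segInf N u (star u) = ρ) ∧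
      ∀ w : ℝ × ℝ, N w = 1 → 0 < wedge u w → segInf N u w = ρ → w = star u)
    (u v : ℝ × ℝ) (hu : N u = 1) (hv : N v = 1) (n m : ℕ) (hn : 0 < n) (hm : 0 < m)
    (hpu : star^[n] u = u) (hnmin : ∀ i : ℕ, 0 < i → i < n → star^[i] u ≠ u)
    (hpv : star^[m] v = v) (hmmin : ∀ i : ℕ, 0 < i → i < m → star^[i] v ≠ v) :
    n = m :=
  stmt_12_general N hN ρ hρ1 star hstar u v hu hv n m hn hm hpu hnmin hpv hmmin
end
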